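/- (Conclusion of the spread bound, case ε ≥ λ_1) With notation as above, suppose additionally ε ≥ λ_1 and ∑_{i=1}^{(b-1)D} λ_i ≥ 1 − 4Δ/√ε. Then S_max^{4Δ/√ε}(Ω_A) − S_min^{2ε}(Ω_A) ≤ log D + 1, where Ω_A has eigenvalues λ_i, S_max^δ and S_min^δ are the smooth entropies, and the proof uses ε' ≤ 2ε (since λ_b ≤ λ_1 ≤ ε and ε' < ε + λ_b) and (b−1)λ_{b−1} ≤ ε' so that log(b−1) ≤ log(2ε) + log(1/λ_b). -/
import Mathlib


/-- δ-smooth max-entropy (base 2). -/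
noncomputable def smoothMax {d : ℕ} (lam : Fin d → ℝ) (δ : ℝ) : ℝ :=
  sInf {x : ℝ | ∃ L : Finset (Fin d), 1 - δ ≤ ∑ i ∈ L, lam i ∧ x = Real.logb 2 L.card}

/-- δ-smooth min-entropy (base 2). -/
noncomputable def smoothMin {d : ℕ} (lam : Fin d → ℝ) (δ : ℝ) : ℝ :=
  - sInf {x : ℝ | ∃ L : Finset (Fin d), ∃ h : L.Nonempty,
      1 - δ ≤ ∑ i ∈ L, lam i ∧ x = Real.logb 2 (L.sup' h lam)}

/-- Conclusion of spread bound, case `ε ≥ λ₁`: with `lam` the descending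
eigenvalues of the density operator `Ω_A` (all positive at index `b`), `b` the least
integer with `ε' = ∑_{i<b} lam i ≥ ε`, `λ₁ ≤ ε ≤ 1`, `D ≥ 1`, and
`∑_{i=1}^{(b−1)D} lam i ≥ 1 − 4Δ/√ε`, one has
`S_max^{4Δ/√ε}(Ω_A) − S_min^{2ε}(Ω_A) ≤ log₂ D + 1`. -/
theorem stmt_9 {d : ℕ} (hd : 0 < d) (lam : Fin d → ℝ) (hanti : Antitone lam)
    (hnn : ∀ i, 0 ≤ lam i) (hsum : ∑ i, lam i = 1)
    (ε Δ : ℝ) (hε0 : 0 < ε) (hε1 : ε ≤ 1) (hΔ : 0 ≤ Δ)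
    (b D : ℕ) (hb2 : 2 ≤ b) (hbd : b ≤ d) (hD : 1 ≤ D)
    (hbmin : ∀ b'' : ℕ, b'' < b →
      ∑ i ∈ Finset.univ.filter (fun i : Fin d => (i : ℕ) + 1 < b''), lam i < ε)
    (hb : ε ≤ ∑ i ∈ Finset.univ.filter (fun i : Fin d => (i : ℕ) + 1 < b), lam i)
    (hlam1 : lam ⟨0, hd⟩ ≤ ε)
    (hlamb : ∀ i : Fin d, (i : ℕ) + 1 = b → 0 < lam i)
    (hsumD : 1 - 4 * Δ / Real.sqrt ε
      ≤ ∑ i ∈ Finset.univ.filter (fun i : Fin d => (i : ℕ) < (b - 1) * D), lam i) :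
    smoothMax lam (4 * Δ / Real.sqrt ε) - smoothMin lam (2 * ε)
      ≤ Real.logb 2 D + 1 := by
  classical
  have hb1d : b - 1 < d := by omega
  have hb2d : b - 2 < d := by omega
  set jb : Fin d := ⟨b - 1, hb1d⟩ with hjbdef
  set j2 : Fin d := ⟨b - 2, hb2d⟩ with hj2def
  have hljb : 0 < lam jb := hlamb jb (by simp [hjbdef]; omega)
  set m := (b - 1) * D with hmdef
  have hm1 : 1 ≤ m := by
    rw [hmdef]
    exact Nat.one_le_iff_ne_zero.mpr (Nat.mul_ne_zero (by omega) (by omega))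
  set L₁ : Finset (Fin d) := Finset.univ.filter (fun i : Fin d => (i : ℕ) < m) with hL₁
  have hcard1 : L₁.card ≤ m := by
    have h : L₁.card ≤ (Finset.range m).card := by
      apply Finset.card_le_card_of_injOn (fun i : Fin d => (i : ℕ))
      · intro a ha
        rw [hL₁] at ha
        simp only [Finset.mem_coe, Finset.mem_filter] at ha
        exact Finset.mem_range.mpr ha.2
      · intro a _ b _ h
        exact Fin.val_injective h
    simpa using h
  have hcard1pos : 1 ≤ L₁.card := by
    refine Finset.card_pos.mpr ⟨⟨0, hd⟩, ?_⟩
    simp [hL₁]; omega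
  -- bound on smoothMax
  have hS1 : smoothMax lam (4 * Δ / Real.sqrt ε) ≤ Real.logb 2 L₁.card := by
    apply csInf_le
    · refine BddBelow.mono ?_
        ((Set.finite_range (fun L : Finset (Fin d) => Real.logb 2 L.card)).bddBelow)
      rintro x ⟨L, _, rfl⟩; exact ⟨L, rfl⟩
    · exact ⟨L₁, hsumD, rfl⟩
  -- the tail set
  set L₂ : Finset (Fin d) := Finset.univ.filter (fun i : Fin d => ¬ ((i : ℕ) + 1 < b)) with hL₂
  have hjb : jb ∈ L₂ := by simp [hL₂, hjbdef]; omega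
  have hne : L₂.Nonempty := ⟨jb, hjb⟩
  have hsup : L₂.sup' hne lam = lam jb := by
    refine le_antisymm (Finset.sup'_le _ _ (fun i hi => ?_)) (Finset.le_sup' lam hjb)
    have hi' : ¬ ((i : ℕ) + 1 < b) := by
      simpa [hL₂] using hi
    exact hanti (by simp [Fin.le_def, hjbdef]; omega)
  set A : Finset (Fin d) := Finset.univ.filter (fun i : Fin d => (i : ℕ) + 1 < b) with hA
  have hsplit : ∑ i ∈ A, lam i + ∑ i ∈ L₂, lam i = 1 := by
    rw [← hsum]
    exact Finset.sum_filter_add_sum_filter_not _ _ _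
  -- ε' ≤ 2ε
  have hAins : A = insert j2 (Finset.univ.filter (fun i : Fin d => (i : ℕ) + 1 < b - 1)) := by
    ext i
    simp only [hA, hj2def, Finset.mem_filter, Finset.mem_univ, true_and, Finset.mem_insert,
      Fin.ext_iff]
    omega
  have hj2not : j2 ∉ Finset.univ.filter (fun i : Fin d => (i : ℕ) + 1 < b - 1) := by
    simp [hj2def]; omega
  have hsumA : ∑ i ∈ A, lam i
      = lam j2 + ∑ i ∈ Finset.univ.filter (fun i : Fin d => (i : ℕ) + 1 < b - 1), lam i := by
    rw [hAins, Finset.sum_insert hj2not]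
  have hj2ε : lam j2 ≤ ε :=
    le_trans (hanti (show (⟨0, hd⟩ : Fin d) ≤ j2 by simp [Fin.le_def])) hlam1
  have hε' : ∑ i ∈ A, lam i ≤ 2 * ε := by
    have h1 := hbmin (b - 1) (by omega)
    linarith
  -- (b-1) * lam jb ≤ ε'
  have hcardA : b - 1 ≤ A.card := by
    have hmin : ∀ j : ℕ, min j (d - 1) < d := fun j =>
      Nat.lt_of_le_of_lt (Nat.min_le_right _ _) (by omega)
    have h : (Finset.range (b - 1)).card ≤ A.card := by
      apply Finset.card_le_card_of_injOn (fun j : ℕ => (⟨min j (d - 1), hmin j⟩ : Fin d))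
      · intro a ha
        have ha' : a < b - 1 := by simpa using ha
        rw [hA]
        simp only [Finset.mem_coe, Finset.mem_filter, Finset.mem_univ, true_and]
        show min a (d - 1) + 1 < b
        have : min a (d - 1) = a := Nat.min_eq_left (by omega)
        omega
      · intro a ha a' ha' h
        have ha1 : a < b - 1 := by simpa using ha
        have ha2 : a' < b - 1 := by simpa using ha'
        have h2 : min a (d - 1) = min a' (d - 1) := congrArg Fin.val h
        have e1 : min a (d - 1) = a := Nat.min_eq_left (by omega)
        have e2 : min a' (d - 1) = a' := Nat.min_eq_left (by omega)
        omega
    simpa using h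
  have hlow : ((b : ℝ) - 1) * lam jb ≤ ∑ i ∈ A, lam i := by
    have h1 : ((b : ℝ) - 1) * lam jb ≤ (A.card : ℝ) * lam jb := by
      apply mul_le_mul_of_nonneg_right _ hljb.le
      have : ((b - 1 : ℕ) : ℝ) ≤ (A.card : ℝ) := by exact_mod_cast hcardA
      have hbc : ((b - 1 : ℕ) : ℝ) = (b : ℝ) - 1 := by
        have : (1 : ℕ) ≤ b := by omega
        push_cast [this]; ring
      linarith [hbc ▸ this]
    have h2 : (A.card : ℝ) * lam jb ≤ ∑ i ∈ A, lam i := by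
      calc (A.card : ℝ) * lam jb = ∑ _i ∈ A, lam jb := by
            rw [Finset.sum_const, nsmul_eq_mul]
        _ ≤ ∑ i ∈ A, lam i := by
            refine Finset.sum_le_sum (fun i hi => ?_)
            have hi' : (i : ℕ) + 1 < b := by simpa [hA] using hi
            exact hanti (by simp [Fin.le_def, hjbdef]; omega)
    linarith
  -- bound on smoothMin
  have hS2 : - smoothMin lam (2 * ε) ≤ Real.logb 2 (lam jb) := by
    rw [smoothMin, neg_neg]
    apply csInf_le
    · refine BddBelow.mono ?_
        ((Set.finite_range (fun i : Fin d => Real.logb 2 (lam i))).bddBelow)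
      rintro x ⟨L, h, _, rfl⟩
      obtain ⟨i, _, hEq⟩ := Finset.exists_mem_eq_sup' h lam
      exact ⟨i, by rw [hEq]⟩
    · exact ⟨L₂, hne, by linarith, by rw [hsup]⟩
  -- final arithmetic
  have hcpos : (0 : ℝ) < (L₁.card : ℝ) := by exact_mod_cast hcard1pos
  have hcm : (L₁.card : ℝ) ≤ ((b : ℝ) - 1) * (D : ℝ) := by
    have h1 : (L₁.card : ℝ) ≤ (m : ℝ) := by exact_mod_cast hcard1
    have : (m : ℝ) = ((b : ℝ) - 1) * (D : ℝ) := by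
      rw [hmdef]
      push_cast [show (1 : ℕ) ≤ b by omega]
      ring
    linarith
  have hDpos : (0 : ℝ) < (D : ℝ) := by exact_mod_cast hD
  have hkey : (L₁.card : ℝ) * lam jb ≤ 2 * (D : ℝ) := by
    have h1 : ((b : ℝ) - 1) * lam jb ≤ 2 * ε := by linarith
    calc (L₁.card : ℝ) * lam jb ≤ (((b : ℝ) - 1) * (D : ℝ)) * lam jb :=
          mul_le_mul_of_nonneg_right hcm hljb.le
      _ = (((b : ℝ) - 1) * lam jb) * (D : ℝ) := by ring
      _ ≤ (2 * ε) * (D : ℝ) := mul_le_mul_of_nonneg_right h1 hDpos.le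
      _ ≤ 2 * (D : ℝ) := by nlinarith
  have hlogb : Real.logb 2 (L₁.card : ℝ) + Real.logb 2 (lam jb)
      ≤ Real.logb 2 (D : ℝ) + 1 := by
    rw [← Real.logb_mul hcpos.ne' hljb.ne']
    have h2D : Real.logb 2 (2 * (D : ℝ)) = 1 + Real.logb 2 (D : ℝ) := by
      rw [Real.logb_mul (by norm_num) hDpos.ne', Real.logb_self_eq_one (by norm_num)]
    have := Real.logb_le_logb_of_le (b := 2) (by norm_num)
      (mul_pos hcpos hljb) hkey
    linarith
  linarith
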